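/- arXiv:2307.08102 — 4 statements merged into one kernel-verified Lean document; each statement's English description precedes it below -/
import Mathlib

section
/- (Claim 1 in the proof of the main theorem.) Assume condition (*) holds for every n ∈ ℕ. Let k ≥ k_0, t ∈ {0,1,2}^k, m ∈ ℕ with k_{m−1} ≤ k < k_m, n ≥ m, and s, u ∈ {0,1,2}^{k_n−1} with t ≺ s and G^0_s ⊂_* J_u. Then G^0_s ⊂ J_{u^2}, G^1_u ⊂ J_{s^0}, and the inequalities l(G^0_s) − r(G^1_u) ≥ m_n, r(J_u) − r(G^0_s) ≥ m_n, l(G^1_u) − l(J_s) ≥ m_n hold. -/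
open Pointwise MeasureTheory

namespace CCS

/-- `dSeq a n` is the common length `d_n = ∏_{i=1}^n (1 - a_i)/2` of the intervals of the
`n`-th step of the construction of the central Cantor set `C(a)` (`d_0 = 1`).
The sequence `a` is indexed from `1`; the value `a 0` is irrelevant. -/
noncomputable def dSeq (a : ℕ → ℝ) (n : ℕ) : ℝ :=
  ∏ i ∈ Finset.Icc 1 n, ((1 - a i) / 2)

/-- Left endpoint of the interval `I_t`, `t ∈ {0,1}^n` (coded as a list, the paper's
`t_j` being `t.getD (j-1) 0`): `l(I_t) = ∑_{j=1}^n t_j (d_{j-1} - d_j)`. -/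
noncomputable def Il (a : ℕ → ℝ) (t : List ℕ) : ℝ :=
  ∑ j ∈ Finset.range t.length, (t.getD j 0 : ℝ) * (dSeq a j - dSeq a (j + 1))

/-- The `n`-th step `C_n(a)` of the construction of the central Cantor set:
the union of the intervals `I_t = [l(I_t), l(I_t) + d_n]` over `t ∈ {0,1}^n`. -/
noncomputable def cantorStep (a : ℕ → ℝ) (n : ℕ) : Set ℝ :=
  ⋃ t ∈ {t : List ℕ | t.length = n ∧ ∀ j ∈ t, j ≤ 1},
    Set.Icc (Il a t) (Il a t + dSeq a n)

/-- The central Cantor set `C(a) = ⋂ₙ C_n(a)`. -/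
noncomputable def cantorSet (a : ℕ → ℝ) : Set ℝ := ⋂ n, cantorStep a n

/-- Left endpoint of the interval `J_s = I_t - I_p`, for `s ∈ {0,1,2}^n`:
`l(J_s) = -1 + ∑_{j=1}^n s_j (d_{j-1} - d_j)`. -/
noncomputable def Jl (a : ℕ → ℝ) (s : List ℕ) : ℝ :=
  -1 + ∑ j ∈ Finset.range s.length, (s.getD j 0 : ℝ) * (dSeq a j - dSeq a (j + 1))

/-- Right endpoint of `J_s`: `r(J_s) = l(J_s) + 2 d_n`. -/
noncomputable def Jr (a : ℕ → ℝ) (s : List ℕ) : ℝ :=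
  Jl a s + 2 * dSeq a s.length

/-- The interval `J_s`. -/
noncomputable def Jset (a : ℕ → ℝ) (s : List ℕ) : Set ℝ := Set.Icc (Jl a s) (Jr a s)

/-- Left endpoint of the gap `G^i_s` (`i = 0`: left gap, `i = 1`: right gap) of `J_s`. -/
noncomputable def Gl (a : ℕ → ℝ) (i : ℕ) (s : List ℕ) : ℝ :=
  Jl a s + (i : ℝ) * (dSeq a s.length - dSeq a (s.length + 1)) + 2 * dSeq a (s.length + 1)

/-- Right endpoint of the gap `G^i_s`. -/
noncomputable def Gr (a : ℕ → ℝ) (i : ℕ) (s : List ℕ) : ℝ :=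
  Jl a s + ((i : ℝ) + 1) * (dSeq a s.length - dSeq a (s.length + 1))

/-- The gap `G^i_s ⊆ J_s`, an open interval. -/
noncomputable def Gset (a : ℕ → ℝ) (i : ℕ) (s : List ℕ) : Set ℝ :=
  Set.Ioo (Gl a i s) (Gr a i s)

/-- `N(0,s) = max {j : s_j > 0}`, `N(1,s) = max {j : s_j < 2}` (1-based, `max ∅ = 0`). -/
noncomputable def Nidx (i : ℕ) (s : List ℕ) : ℕ :=
  sSup {j | 1 ≤ j ∧ j ≤ s.length ∧
    (if i = 0 then 0 < s.getD (j - 1) 0 else s.getD (j - 1) 0 < 2)}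

/-- The family `𝒢^{i0}_{s0}(n)` of (indices of) gaps of rank `n`, for
`s0 ∈ {0,1,2}^{k_m - 1}`; a gap `G^i_s` is coded by the pair `(i, s)`.
`𝒢^{i0}_{s0}(m) = {G^{i0}_{s0}}` and for `n > m`,
`𝒢^{i0}_{s0}(n)` consists of the gap `Ḡ^{i0}_{s0}(n)` together with the gaps
`Ḡ^1_{t^j}(n)`, `Ḡ^0_{t^(j+1)}(n)` for all `G^j_t ∈ 𝒢^{i0}_{s0}(l)`, `m ≤ l < n`. -/
def gapFamily (k : ℕ → ℕ) (i0 : ℕ) (s0 : List ℕ) (m : ℕ) (n : ℕ) : Set (ℕ × List ℕ) :=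
  if n ≤ m then {(i0, s0)}
  else
    {(i0, s0 ++ List.replicate (k n - k m) (2 * i0))} ∪
      ⋃ (l : ℕ) (_ : m ≤ l) (hl : l < n),
        ⋃ p ∈ gapFamily k i0 s0 m l,
          ({(1, p.2 ++ p.1 :: List.replicate (k n - k l - 1) 2),
            (0, p.2 ++ (p.1 + 1) :: List.replicate (k n - k l - 1) 0)} : Set (ℕ × List ℕ))
termination_by n
decreasing_by exact hl

/-- The family `𝒢^{i0}_{s0} = ⋃_{n ≥ m} 𝒢^{i0}_{s0}(n)`. -/
def gapFamilyAll (k : ℕ → ℕ) (i0 : ℕ) (s0 : List ℕ) (m : ℕ) : Set (ℕ × List ℕ) :=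
  ⋃ (n : ℕ) (_ : m ≤ n), gapFamily k i0 s0 m n

/-- The family `𝒢_t := 𝒢^0_{t ++ 0^{(k_m - |t| - 1)}} ∪ 𝒢^1_{t ++ 2^{(k_m - |t| - 1)}}`
for `t ∈ {0,1,2}^k` with `k_{m-1} ≤ k < k_m`. -/
def gapFamilyT (k : ℕ → ℕ) (m : ℕ) (t : List ℕ) : Set (ℕ × List ℕ) :=
  gapFamilyAll k 0 (t ++ List.replicate (k m - t.length - 1) 0) m ∪
    gapFamilyAll k 1 (t ++ List.replicate (k m - t.length - 1) 2) m

/-- The union `⋃ 𝒢` of a family of (indices of) gaps, as a subset of `ℝ`. -/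
noncomputable def gapUnion (a : ℕ → ℝ) (G : Set (ℕ × List ℕ)) : Set ℝ :=
  ⋃ p ∈ G, Gset a p.1 p.2

/-- `padSeq k c s m n` is the index of the gap `G^i(s,n)` (for `c = 2i`):
`s ++ c^{(k_m - |s| - 1)} ++ 1 ++ c^{(k_{m+1} - k_m - 1)} ++ 1 ++ ⋯ ++ 1 ++ c^{(k_n - k_{n-1} - 1)}`. -/
def padSeq (k : ℕ → ℕ) (c : ℕ) (s : List ℕ) (m : ℕ) : ℕ → List ℕ
  | 0 => s ++ List.replicate (k m - s.length - 1) c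
  | n + 1 =>
    if n + 1 ≤ m then s ++ List.replicate (k m - s.length - 1) c
    else padSeq k c s m n ++ 1 :: List.replicate (k (n + 1) - k n - 1) c

/-- `δ_n := min {3d_i - d_{i-1} : k_{n-1} + 1 ≤ i ≤ k_n - 1}` (as an element of `EReal`,
so that `min ∅ = ⊤ = ∞`). -/
noncomputable def deltaMin (a : ℕ → ℝ) (k : ℕ → ℕ) (n : ℕ) : EReal :=
  sInf ((fun i => ((3 * dSeq a i - dSeq a (i - 1) : ℝ) : EReal)) ''
    (Set.Icc (k (n - 1) + 1) (k n - 1)))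

/-- `Δ_n := max {3d_i - d_{i-1} : k_{n-1} + 1 ≤ i ≤ k_n - 1}` (`max ∅ = ⊥ = -∞`). -/
noncomputable def deltaMax (a : ℕ → ℝ) (k : ℕ → ℕ) (n : ℕ) : EReal :=
  sSup ((fun i => ((3 * dSeq a i - dSeq a (i - 1) : ℝ) : EReal)) ''
    (Set.Icc (k (n - 1) + 1) (k n - 1)))

/-- `m_n := min { δ_n - (d_{k_n - 1} - d_{k_n}), 4 d_{k_n} - Δ_n }`. -/
noncomputable def mSeq (a : ℕ → ℝ) (k : ℕ → ℕ) (n : ℕ) : EReal :=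
  min (deltaMin a k n - ((dSeq a (k n - 1) - dSeq a (k n) : ℝ) : EReal))
    (((4 * dSeq a (k n) : ℝ) : EReal) - deltaMax a k n)

/-- `∑_{i=n+1}^∞ (d_{k_i - 1} - d_{k_i})`. -/
noncomputable def tailSum (a : ℕ → ℝ) (k : ℕ → ℕ) (n : ℕ) : ℝ :=
  ∑' i : ℕ, (dSeq a (k (n + 1 + i) - 1) - dSeq a (k (n + 1 + i)))

/-- Condition `(*)`: `m_n ≥ 2 ∑_{i=n+1}^∞ (d_{k_i - 1} - d_{k_i})` for every `n ∈ ℕ`. -/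
def condStar (a : ℕ → ℝ) (k : ℕ → ℕ) : Prop :=
  ∀ n : ℕ, 1 ≤ n → ((2 * tailSum a k n : ℝ) : EReal) ≤ mSeq a k n

/-- `(k_n)_{n ≥ 1}` is the increasing enumeration of all indices greater than `k 0 = k₀`
at which `a` exceeds `1/3`. -/
def IsGapEnum (a : ℕ → ℝ) (k : ℕ → ℕ) : Prop :=
  StrictMono k ∧ (∀ n, 1 ≤ n → k 0 < k n ∧ 1 / 3 < a (k n)) ∧
    (∀ j, k 0 < j → 1 / 3 < a j → ∃ n, 1 ≤ n ∧ k n = j)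

/-- `G` is a gap of `E`: a bounded connected component of `ℝ ∖ E`. -/
def IsGapOf (E G : Set ℝ) : Prop :=
  (∃ x ∉ E, G = connectedComponentIn Eᶜ x) ∧ Bornology.IsBounded G

/-- `C` is a proper (nontrivial) connected component of `E`. -/
def IsProperComponentOf (E C : Set ℝ) : Prop :=
  (∃ x ∈ E, C = connectedComponentIn E x) ∧ C.Nontrivial

/-- `E` is a Cantorval: a perfect set with infinitely many gaps such that both endpoints
of every gap are accumulated both by gaps and by proper components of `E`. -/
def IsCantorval (E : Set ℝ) : Prop :=
  Perfect E ∧ {G : Set ℝ | IsGapOf E G}.Infinite ∧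
    ∀ G, IsGapOf E G → ∀ p, p = sInf G ∨ p = sSup G →
      (∀ ε > 0, ∃ G', IsGapOf E G' ∧ G' ≠ G ∧ G' ⊆ Set.Ioo (p - ε) (p + ε)) ∧
      (∀ ε > 0, ∃ C, IsProperComponentOf E C ∧ C ⊆ Set.Ioo (p - ε) (p + ε))

/-- `J_s` and `J_u` (of length `k_m - 1`) are associated:
`N := N(0,s) = N(1,u) ∈ {k_{m-1}+1, …, k_m - 1}`, `s|(N-1) = u|(N-1)`, `u_N = s_N - 1`.
Then `J_u` is the interval covering `𝒢^0_s` and `J_s` is the interval covering `𝒢^1_u`. -/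
def Associated (k : ℕ → ℕ) (m : ℕ) (s u : List ℕ) : Prop :=
  s.length = k m - 1 ∧ u.length = k m - 1 ∧
    Nidx 0 s = Nidx 1 u ∧
    k (m - 1) + 1 ≤ Nidx 0 s ∧ Nidx 0 s ≤ k m - 1 ∧
    s.take (Nidx 0 s - 1) = u.take (Nidx 0 s - 1) ∧
    u.getD (Nidx 0 s - 1) 0 = s.getD (Nidx 0 s - 1) 0 - 1

/-- `G^i_g ⊂_* J_v`: the gap `G^i_g` is covered by the interval `J_v`, i.e. `G^i_g`
belongs to a family `𝒢^0_w` (resp. `𝒢^1_w`) such that `J_v` is the interval covering it. -/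
def CoversGap (k : ℕ → ℕ) (i : ℕ) (g : List ℕ) (v : List ℕ) : Prop :=
  ∃ m w, 1 ≤ m ∧
    ((Associated k m w v ∧ (i, g) ∈ gapFamilyAll k 0 w m) ∨
      (Associated k m v w ∧ (i, g) ∈ gapFamilyAll k 1 w m))

/-- The achievement set `E(x) = {∑_{j ∈ A} x_j : A ⊆ ℕ}` of a series (indexed from `1`). -/
def achievementSet (x : ℕ → ℝ) : Set ℝ :=
  {y | ∃ A : Set ℕ, A ⊆ {n | 1 ≤ n} ∧ HasSum (A.indicator x) y}


lemma dSeq_pos (a : ℕ → ℝ) (ha : ∀ n, 1 ≤ n → 0 < a n ∧ a n < 1) (n : ℕ) : 0 < dSeq a n := by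
  apply Finset.prod_pos
  intro i hi
  have h := ha i (Finset.mem_Icc.mp hi).1
  linarith [h.1, h.2]

lemma dSeq_succ (a : ℕ → ℝ) (n : ℕ) :
    dSeq a (n + 1) = dSeq a n * ((1 - a (n + 1)) / 2) := by
  unfold dSeq
  rw [Finset.prod_Icc_succ_top (by omega : 1 ≤ n + 1)]

lemma dSeq_anti (a : ℕ → ℝ) (ha : ∀ n, 1 ≤ n → 0 < a n ∧ a n < 1) : Antitone (dSeq a) := by
  apply antitone_nat_of_succ_le
  intro n
  rw [dSeq_succ]
  have h := ha (n + 1) (by omega)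
  nlinarith [dSeq_pos a ha n, h.1, h.2]

lemma Jl_append (a : ℕ → ℝ) (v : List ℕ) (c : ℕ) :
    Jl a (v ++ [c]) = Jl a v + (c : ℝ) * (dSeq a v.length - dSeq a (v.length + 1)) := by
  unfold Jl
  have hlen : (v ++ [c]).length = v.length + 1 := by simp
  rw [hlen, Finset.sum_range_succ]
  have h1 : ∀ j ∈ Finset.range v.length,
      ((v ++ [c]).getD j 0 : ℝ) * (dSeq a j - dSeq a (j + 1))
        = (v.getD j 0 : ℝ) * (dSeq a j - dSeq a (j + 1)) := by
    intro j hj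
    rw [List.getD_append _ _ _ _ (Finset.mem_range.mp hj)]
  rw [Finset.sum_congr rfl h1]
  have h2 : (v ++ [c]).getD v.length 0 = c := by
    rw [List.getD_append_right _ _ _ _ le_rfl]; simp
  rw [h2]; ring

lemma Jl_diff (a : ℕ → ℝ) (s u : List ℕ) (N : ℕ)
    (hlen : s.length = u.length)
    (hN1 : 1 ≤ N) (hN2 : N ≤ s.length)
    (htake : s.take (N - 1) = u.take (N - 1))
    (hsN : 1 ≤ s.getD (N - 1) 0)
    (huN : u.getD (N - 1) 0 = s.getD (N - 1) 0 - 1)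
    (hs0 : ∀ j, N ≤ j → j < s.length → s.getD j 0 = 0)
    (hu2 : ∀ j, N ≤ j → j < s.length → u.getD j 0 = 2) :
    Jl a s - Jl a u
      = (dSeq a (N - 1) - dSeq a N) - 2 * (dSeq a N - dSeq a s.length) := by
  unfold Jl
  rw [← hlen]
  set D : ℕ → ℝ := fun j => dSeq a j - dSeq a (j + 1) with hD
  have hsplit : ∀ f : ℕ → ℝ, ∑ j ∈ Finset.range s.length, f j
      = ∑ j ∈ Finset.Ico 0 (N - 1), f j + (f (N - 1) + ∑ j ∈ Finset.Ico N s.length, f j) := by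
    intro f
    rw [Finset.range_eq_Ico, ← Finset.sum_Ico_consecutive _ (Nat.zero_le (N - 1)) (by omega),
        Finset.sum_eq_sum_Ico_succ_bot (by omega : N - 1 < s.length)]
    have : N - 1 + 1 = N := by omega
    rw [this]
  rw [hsplit (fun j => (s.getD j 0 : ℝ) * D j), hsplit (fun j => (u.getD j 0 : ℝ) * D j)]
  have e1 : ∑ j ∈ Finset.Ico 0 (N - 1), (s.getD j 0 : ℝ) * D j
      = ∑ j ∈ Finset.Ico 0 (N - 1), (u.getD j 0 : ℝ) * D j := by
    apply Finset.sum_congr rfl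
    intro j hj
    have hj' : j < N - 1 := (Finset.mem_Ico.mp hj).2
    have : s.getD j 0 = u.getD j 0 := by
      have h1 : (s.take (N - 1)).getD j 0 = s.getD j 0 := by
        simp [List.getD, List.getElem?_take, hj']
      have h2 : (u.take (N - 1)).getD j 0 = u.getD j 0 := by
        simp [List.getD, List.getElem?_take, hj']
      rw [← h1, ← h2, htake]
    rw [this]
  have e2 : ((u.getD (N - 1) 0 : ℕ) : ℝ) = (s.getD (N - 1) 0 : ℝ) - 1 := by
    rw [huN, Nat.cast_sub hsN, Nat.cast_one]
  have e3 : ∑ j ∈ Finset.Ico N s.length, (s.getD j 0 : ℝ) * D j = 0 := by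
    apply Finset.sum_eq_zero
    intro j hj
    rw [hs0 j (Finset.mem_Ico.mp hj).1 (Finset.mem_Ico.mp hj).2]
    simp
  have e4 : ∑ j ∈ Finset.Ico N s.length, (u.getD j 0 : ℝ) * D j
      = 2 * (dSeq a N - dSeq a s.length) := by
    have h5 : ∑ j ∈ Finset.Ico N s.length, (u.getD j 0 : ℝ) * D j
        = ∑ j ∈ Finset.Ico N s.length, (2 : ℝ) * D j := by
      apply Finset.sum_congr rfl
      intro j hj
      rw [hu2 j (Finset.mem_Ico.mp hj).1 (Finset.mem_Ico.mp hj).2]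
      norm_num
    rw [h5, ← Finset.mul_sum]
    have htel : ∑ j ∈ Finset.Ico N s.length, D j = dSeq a N - dSeq a s.length := by
      rw [Finset.sum_Ico_eq_sub _ hN2]
      have h1 : ∑ j ∈ Finset.range s.length, D j = dSeq a 0 - dSeq a s.length :=
        Finset.sum_range_sub' (dSeq a) s.length
      have h2 : ∑ j ∈ Finset.range N, D j = dSeq a 0 - dSeq a N :=
        Finset.sum_range_sub' (dSeq a) N
      rw [h1, h2]; ring
    rw [htel]
  rw [e1, e2, e3, e4]
  have hN' : N - 1 + 1 = N := by omega
  simp only [hD]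
  rw [hN']
  ring

lemma Nidx_mem (i : ℕ) (s : List ℕ) (h : 1 ≤ Nidx i s) :
    1 ≤ Nidx i s ∧ Nidx i s ≤ s.length ∧
      (if i = 0 then 0 < s.getD (Nidx i s - 1) 0 else s.getD (Nidx i s - 1) 0 < 2) := by
  have hbdd : BddAbove {j | 1 ≤ j ∧ j ≤ s.length ∧
      (if i = 0 then 0 < s.getD (j - 1) 0 else s.getD (j - 1) 0 < 2)} :=
    ⟨s.length, fun j hj => hj.2.1⟩
  rcases Set.eq_empty_or_nonempty {j | 1 ≤ j ∧ j ≤ s.length ∧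
      (if i = 0 then 0 < s.getD (j - 1) 0 else s.getD (j - 1) 0 < 2)} with he | hne
  · exfalso
    unfold Nidx at h
    rw [he, csSup_empty] at h
    exact absurd h (by simp)
  · exact Nat.sSup_mem hne hbdd

lemma le_Nidx (i : ℕ) (s : List ℕ) {j : ℕ} (h1 : 1 ≤ j) (h2 : j ≤ s.length)
    (h3 : if i = 0 then 0 < s.getD (j - 1) 0 else s.getD (j - 1) 0 < 2) :
    j ≤ Nidx i s :=
  le_csSup ⟨s.length, fun x hx => hx.2.1⟩ ⟨h1, h2, h3⟩


/-- Claim 1: under condition `(*)`, if `t ≺ s`, `s, u ∈ {0,1,2}^{kₙ-1}` and `J_u` is the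
interval covering `𝒢⁰_s` (so `G⁰_s ⊂_* J_u`), then `G⁰_s ⊆ J_{u⌢2}`, `G¹_u ⊆ J_{s⌢0}` and
`l(G⁰_s) - r(G¹_u) ≥ mₙ`, `r(J_u) - r(G⁰_s) ≥ mₙ`, `l(G¹_u) - l(J_s) ≥ mₙ`. -/
theorem claim1_covering_estimates (a : ℕ → ℝ) (k : ℕ → ℕ)
    (ha : ∀ n, 1 ≤ n → 0 < a n ∧ a n < 1)
    (hinf : {n : ℕ | 1 ≤ n ∧ 1 / 3 < a n}.Infinite)
    (hk0 : a (k 0 + 1) < 1 / 3)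
    (hk : IsGapEnum a k)
    (hstar : condStar a k)
    (t : List ℕ) (ht2 : ∀ x ∈ t, x ≤ 2) (htk0 : k 0 ≤ t.length)
    (m : ℕ) (hm : 1 ≤ m) (hm1 : k (m - 1) ≤ t.length) (hm2 : t.length < k m)
    (n : ℕ) (hn : m ≤ n)
    (s u : List ℕ) (hs2 : ∀ x ∈ s, x ≤ 2) (hu2 : ∀ x ∈ u, x ≤ 2)
    (hslen : s.length = k n - 1) (hulen : u.length = k n - 1)
    (hts : t <+: s)
    (hcov : Associated k n s u) :
    Gset a 0 s ⊆ Jset a (u ++ [2]) ∧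
      Gset a 1 u ⊆ Jset a (s ++ [0]) ∧
      mSeq a k n ≤ ((Gl a 0 s - Gr a 1 u : ℝ) : EReal) ∧
      mSeq a k n ≤ ((Jr a u - Gr a 0 s : ℝ) : EReal) ∧
      mSeq a k n ≤ ((Gl a 1 u - Jl a s : ℝ) : EReal) := by
  obtain ⟨hsl', hul', hNu, hNlo, hNhi, htake, hgetD⟩ := hcov
  set N := Nidx 0 s with hNdef
  have hn1 : 1 ≤ n := le_trans hm hn
  have hkn1 : 1 ≤ k n := by have := (hk.2.1 n hn1).1; omega
  have hN1 : 1 ≤ N := le_trans (by omega) hNlo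
  have hN2 : N ≤ s.length := by rw [hslen]; exact hNhi
  have hsmem := Nidx_mem 0 s hN1
  have hsNpos : 0 < s.getD (N - 1) 0 := by simpa using hsmem.2.2
  have hs0 : ∀ j, N ≤ j → j < s.length → s.getD j 0 = 0 := by
    intro j hj1 hj2
    by_contra hcon
    have h1 : 1 ≤ j + 1 := by omega
    have h2 : j + 1 ≤ s.length := by omega
    have h3 : if (0:ℕ) = 0 then 0 < s.getD (j + 1 - 1) 0 else s.getD (j + 1 - 1) 0 < 2 := by
      simp only [Nat.add_sub_cancel, if_true]
      omega
    have h4 : j + 1 ≤ N := le_Nidx 0 s h1 h2 h3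
    omega
  have hu2' : ∀ j, N ≤ j → j < s.length → u.getD j 0 = 2 := by
    intro j hj1 hj2
    have hjlen : j < u.length := by omega
    have hle : u.getD j 0 ≤ 2 := by
      rw [List.getD_eq_getElem u 0 hjlen]
      exact hu2 _ (List.getElem_mem hjlen)
    by_contra hcon
    have hlt : u.getD j 0 < 2 := by omega
    have h1 : 1 ≤ j + 1 := by omega
    have h2 : j + 1 ≤ u.length := by omega
    have h3 : if (1:ℕ) = 0 then 0 < u.getD (j + 1 - 1) 0 else u.getD (j + 1 - 1) 0 < 2 := by
      simp only [Nat.add_sub_cancel, Nat.one_ne_zero, if_false]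
      omega
    have h4 : j + 1 ≤ Nidx 1 u := le_Nidx 1 u h1 h2 h3
    rw [← hNu] at h4
    omega
  have hkey : Jl a s - Jl a u
      = (dSeq a (N - 1) - dSeq a N) - 2 * (dSeq a N - dSeq a s.length) :=
    Jl_diff a s u N (by rw [hslen, hulen]) hN1 hN2 htake (by omega) hgetD hs0 hu2'
  rw [hslen] at hkey
  -- EReal estimates
  have hNIcc : N ∈ Set.Icc (k (n - 1) + 1) (k n - 1) := ⟨hNlo, hNhi⟩
  have hδ : deltaMin a k n ≤ ((3 * dSeq a N - dSeq a (N - 1) : ℝ) : EReal) :=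
    sInf_le ⟨N, hNIcc, rfl⟩
  have hΔ : ((3 * dSeq a N - dSeq a (N - 1) : ℝ) : EReal) ≤ deltaMax a k n :=
    le_sSup ⟨N, hNIcc, rfl⟩
  have hr2 : mSeq a k n ≤
      (((3 * dSeq a N - dSeq a (N - 1)) - (dSeq a (k n - 1) - dSeq a (k n)) : ℝ) : EReal) := by
    calc mSeq a k n ≤ deltaMin a k n - ((dSeq a (k n - 1) - dSeq a (k n) : ℝ) : EReal) :=
          min_le_left _ _
      _ ≤ ((3 * dSeq a N - dSeq a (N - 1) : ℝ) : EReal)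
            - ((dSeq a (k n - 1) - dSeq a (k n) : ℝ) : EReal) := EReal.sub_le_sub hδ le_rfl
      _ = _ := (EReal.coe_sub _ _).symm
  have hr1 : mSeq a k n ≤
      ((4 * dSeq a (k n) - (3 * dSeq a N - dSeq a (N - 1)) : ℝ) : EReal) := by
    calc mSeq a k n ≤ ((4 * dSeq a (k n) : ℝ) : EReal) - deltaMax a k n := min_le_right _ _
      _ ≤ ((4 * dSeq a (k n) : ℝ) : EReal)
            - ((3 * dSeq a N - dSeq a (N - 1) : ℝ) : EReal) := EReal.sub_le_sub le_rfl hΔ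
      _ = _ := (EReal.coe_sub _ _).symm
  have h0 : (0 : EReal) ≤ mSeq a k n := by
    refine le_trans ?_ (hstar n hn1)
    have htail : 0 ≤ tailSum a k n := by
      apply tsum_nonneg
      intro i
      exact sub_nonneg.mpr (dSeq_anti a ha (Nat.sub_le _ 1))
    exact EReal.coe_nonneg.mpr (by linarith)
  have h0r1 : 0 ≤ 4 * dSeq a (k n) - (3 * dSeq a N - dSeq a (N - 1)) :=
    EReal.coe_nonneg.mp (le_trans h0 hr1)
  have h0r2 : 0 ≤ (3 * dSeq a N - dSeq a (N - 1)) - (dSeq a (k n - 1) - dSeq a (k n)) :=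
    EReal.coe_nonneg.mp (le_trans h0 hr2)
  -- endpoint computations
  have hsucc : k n - 1 + 1 = k n := by omega
  have hGl0s : Gl a 0 s = Jl a s + 2 * dSeq a (k n) := by
    unfold Gl; rw [hslen, hsucc]; norm_num
  have hGr0s : Gr a 0 s = Jl a s + (dSeq a (k n - 1) - dSeq a (k n)) := by
    unfold Gr; rw [hslen, hsucc]; norm_num
  have hGl1u : Gl a 1 u = Jl a u + (dSeq a (k n - 1) - dSeq a (k n)) + 2 * dSeq a (k n) := by
    unfold Gl; rw [hulen, hsucc]; norm_num
  have hGr1u : Gr a 1 u = Jl a u + 2 * (dSeq a (k n - 1) - dSeq a (k n)) := by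
    unfold Gr; rw [hulen, hsucc]; norm_num
  have hJru : Jr a u = Jl a u + 2 * dSeq a (k n - 1) := by
    unfold Jr; rw [hulen]
  have hJlu2 : Jl a (u ++ [2]) = Jl a u + 2 * (dSeq a (k n - 1) - dSeq a (k n)) := by
    rw [Jl_append, hulen, hsucc]; norm_num
  have hlenu2 : (u ++ [2]).length = k n := by simp [hulen]; omega
  have hJru2 : Jr a (u ++ [2]) = Jl a (u ++ [2]) + 2 * dSeq a (k n) := by
    unfold Jr; rw [hlenu2]
  have hJls0 : Jl a (s ++ [0]) = Jl a s := by
    rw [Jl_append]; norm_num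
  have hlens0 : (s ++ [0]).length = k n := by simp [hslen]; omega
  have hJrs0 : Jr a (s ++ [0]) = Jl a (s ++ [0]) + 2 * dSeq a (k n) := by
    unfold Jr; rw [hlens0]
  refine ⟨?_, ?_, ?_, ?_, ?_⟩
  · unfold Gset Jset
    refine Set.Ioo_subset_Icc_self.trans (Set.Icc_subset_Icc ?_ ?_)
    · rw [hGl0s, hJlu2]; linarith
    · rw [hGr0s, hJru2, hJlu2]; linarith
  · unfold Gset Jset
    refine Set.Ioo_subset_Icc_self.trans (Set.Icc_subset_Icc ?_ ?_)
    · rw [hGl1u, hJls0]; linarith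
    · rw [hGr1u, hJrs0, hJls0]; linarith
  · have heq : Gl a 0 s - Gr a 1 u
        = 4 * dSeq a (k n) - (3 * dSeq a N - dSeq a (N - 1)) := by
      rw [hGl0s, hGr1u]; linarith
    rw [heq]; exact hr1
  · have heq : Jr a u - Gr a 0 s
        = (3 * dSeq a N - dSeq a (N - 1)) - (dSeq a (k n - 1) - dSeq a (k n)) := by
      rw [hJru, hGr0s]; linarith
    rw [heq]; exact hr2
  · have heq : Gl a 1 u - Jl a s
        = (3 * dSeq a N - dSeq a (N - 1)) - (dSeq a (k n - 1) - dSeq a (k n)) := by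
      rw [hGl1u]; linarith
    rw [heq]; exact hr2

end CCS
end

section
/- (Claim 2 in the proof of the main theorem.) Assume condition (*) holds for every n ∈ ℕ. Let k ≥ k_0, t ∈ {0,1,2}^k and m ∈ ℕ with k_{m−1} ≤ k < k_m. Then for every n ≥ m, every s ∈ {0,1,2}^{k_n−1} with t ≺ s and every i ∈ {0,1} such that G^i_s ∉ 𝒢_t, there exists a finite sequence u with terms in {0,1,2} such that t ≺ u and G^i_s ⊂_* J_u. -/
open Pointwise MeasureTheory

namespace CCS

/-!
Put `e = 2i`. If `s` is `t` followed by `e`'s, then `G^i_s` is the extreme gap of rank `n` of one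
of the two families making up `𝒢_t`. Otherwise write `s = p ++ x :: e^r` with `t ≺ p` and
`x ≠ e`, so that `N(i,s) = |p| + 1`. If `N(i,s) = k_l`, then `G^i_s` is a child, in the
recursion defining the families `𝒢^{i₀}_w(·)`, of the gap `G^j_p` of rank `l < n`
(`x + i = j + 1`); membership in `𝒢_t` and being covered both pass from parent to child, so
induction on `n` applies. Otherwise `k_{l-1} < N(i,s) < k_l`, so `G^i_s` is the extreme gap of
rank `n` of `𝒢^i_w`, `w = s|(k_l - 1)`, and moving the entry `x` by one towards `e` and
filling the rest of `w` with `2 - e` gives the interval `J_u` associated with `J_w`.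
-/

theorem _root_.List.eq_replicate_or_exists_eq_append_cons_replicate {α : Type*} (e : α) :
    ∀ d : List α, d = List.replicate d.length e ∨
      ∃ q x r, x ≠ e ∧ d = q ++ x :: List.replicate r e
  | [] => Or.inl rfl
  | y :: d => by
    rcases eq_replicate_or_exists_eq_append_cons_replicate e d with hd | ⟨q, x, r, hx, hd⟩
    · by_cases hy : y = e
      · exact Or.inl (by rw [hy, hd]; simp [List.replicate_succ])
      · exact Or.inr ⟨[], y, d.length, hy, by rw [← hd]; rfl⟩
    · exact Or.inr ⟨y :: q, x, r, hx, by rw [hd]; rfl⟩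

theorem _root_.Monotone.exists_lt_pred_and_le {k : ℕ → ℕ} (hk : Monotone k) {a b N : ℕ}
    (ha : k a < N) (hb : N ≤ k b) : ∃ l, a < l ∧ l ≤ b ∧ k (l - 1) < N ∧ N ≤ k l := by
  induction b with
  | zero => exact absurd (hk (Nat.zero_le a)) (by omega)
  | succ b ih =>
    by_cases hNb : N ≤ k b
    · obtain ⟨l, hal, hlb, hl⟩ := ih hNb
      exact ⟨l, hal, by omega, hl⟩
    · have hab : a < b + 1 := by
        by_contra! hba
        exact absurd (hk hba) (by omega)
      exact ⟨b + 1, hab, le_rfl, by simpa using Nat.lt_of_not_le hNb, hb⟩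

theorem Nidx_append_cons_replicate {i x e : ℕ} (q : List ℕ) (r : ℕ)
    (hx : if i = 0 then 0 < x else x < 2) (he : ¬ if i = 0 then 0 < e else e < 2) :
    Nidx i (q ++ x :: List.replicate r e) = q.length + 1 := by
  refine IsGreatest.csSup_eq ⟨⟨le_add_self, by simp, by simpa using hx⟩, ?_⟩
  rintro j ⟨hj1, hjlen, hj⟩
  by_contra! hqj
  obtain ⟨c, rfl⟩ : ∃ c, j = q.length + 2 + c := ⟨j - (q.length + 2), by omega⟩
  have hc : c < r := by simp at hjlen; omega
  rw [show q.length + 2 + c - 1 = q.length + (c + 1) by omega,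
    List.getD_append_right _ _ _ _ (by omega)] at hj
  exact he (by simpa [hc] using hj)

theorem associated_append_cons_replicate {k : ℕ → ℕ} {m x r : ℕ} (q : List ℕ) (hx : x ≤ 1)
    (hlen : q.length + 1 + r = k m - 1) (hN : k (m - 1) < q.length + 1) :
    Associated k m (q ++ (x + 1) :: List.replicate r 0) (q ++ x :: List.replicate r 2) := by
  have hN0 : Nidx 0 (q ++ (x + 1) :: List.replicate r 0) = q.length + 1 :=
    Nidx_append_cons_replicate q r (by simp) (by simp)
  have hN1 : Nidx 1 (q ++ x :: List.replicate r 2) = q.length + 1 :=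
    Nidx_append_cons_replicate q r (by simp; omega) (by simp)
  refine ⟨by simp; omega, by simp; omega, hN0.trans hN1.symm, ?_⟩
  rw [hN0]
  refine ⟨by omega, by omega, by simp, ?_⟩
  simp

theorem gapFamily_of_le {k : ℕ → ℕ} {i0 m n : ℕ} (s0 : List ℕ) (h : n ≤ m) :
    gapFamily k i0 s0 m n = {(i0, s0)} := by
  rw [gapFamily, if_pos h]

theorem mem_gapFamily_of_lt {k : ℕ → ℕ} {i0 m n : ℕ} {s0 : List ℕ} (h : m < n)
    {q : ℕ × List ℕ} :
    q ∈ gapFamily k i0 s0 m n ↔ q = (i0, s0 ++ List.replicate (k n - k m) (2 * i0)) ∨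
      ∃ l < n, m ≤ l ∧ ∃ j p, (j, p) ∈ gapFamily k i0 s0 m l ∧
        (q = (1, p ++ j :: List.replicate (k n - k l - 1) 2) ∨
          q = (0, p ++ (j + 1) :: List.replicate (k n - k l - 1) 0)) := by
  rw [gapFamily, if_neg (by omega)]
  simp

theorem extreme_mem_gapFamily (k : ℕ → ℕ) (i0 : ℕ) (s0 : List ℕ) {m n : ℕ} (h : m ≤ n) :
    (i0, s0 ++ List.replicate (k n - k m) (2 * i0)) ∈ gapFamily k i0 s0 m n := by
  rcases h.lt_or_eq with h | rfl
  · exact mem_gapFamily_of_lt h |>.2 (Or.inl rfl)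
  · simp [gapFamily_of_le]

theorem child_mem_gapFamily {k : ℕ → ℕ} {i0 : ℕ} {s0 : List ℕ} {m l n i j x : ℕ}
    {p : List ℕ} (hml : m ≤ l) (hln : l < n) (hp : (j, p) ∈ gapFamily k i0 s0 m l)
    (hi : i ≤ 1) (hx : x + i = j + 1) :
    (i, p ++ x :: List.replicate (k n - k l - 1) (2 * i)) ∈ gapFamily k i0 s0 m n := by
  refine mem_gapFamily_of_lt (hml.trans_lt hln) |>.2 (Or.inr ⟨l, hln, hml, j, p, hp, ?_⟩)
  interval_cases i
  · exact Or.inr (by simp; omega)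
  · exact Or.inl (by simp; omega)

theorem length_of_mem_gapFamily {k : ℕ → ℕ} (hk : StrictMono k) {i0 m : ℕ} {s0 : List ℕ}
    (hm : 1 ≤ m) (hs0 : s0.length = k m - 1) :
    ∀ n, m ≤ n → ∀ q ∈ gapFamily k i0 s0 m n, q.2.length = k n - 1 := by
  have hkm : 1 ≤ k m := hm.trans hk.le_apply
  intro n
  induction n using Nat.strong_induction_on with
  | _ n ih =>
    intro hmn q hq
    rcases hmn.lt_or_eq with hmn | rfl
    · have hkmn := hk hmn
      rcases (mem_gapFamily_of_lt hmn).1 hq with rfl | ⟨l, hln, hml, j, p, hp, rfl | rfl⟩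
      · simp; omega
      all_goals
        have hpl : p.length = k l - 1 := ih l hln hml _ hp
        have := hk hln
        have := hk.monotone hml
        simp; omega
    · simp_all [gapFamily_of_le]

theorem child_mem_gapFamilyAll {k : ℕ → ℕ} (hk : StrictMono k) {i0 m l n i j x : ℕ}
    {s0 p : List ℕ} (hm : 1 ≤ m) (hs0 : s0.length = k m - 1)
    (hp : (j, p) ∈ gapFamilyAll k i0 s0 m) (hpl : p.length = k l - 1) (hml : m ≤ l)
    (hln : l < n) (hi : i ≤ 1) (hx : x + i = j + 1) :
    (i, p ++ x :: List.replicate (k n - k l - 1) (2 * i)) ∈ gapFamilyAll k i0 s0 m := by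
  obtain ⟨l', hml', hp'⟩ := Set.mem_iUnion₂.1 hp
  have hll' : l' = l := by
    have := length_of_mem_gapFamily hk hm hs0 l' hml' _ hp'
    have := hm.trans (hk.le_apply (x := m))
    have := hk.monotone hml
    have := hk.monotone hml'
    exact hk.injective (by simp at *; omega)
  subst hll'
  exact Set.mem_iUnion₂.2 ⟨n, hml.trans hln.le, child_mem_gapFamily hml hln hp' hi hx⟩

theorem mem_gapFamilyT_of_eq_append_replicate {k : ℕ → ℕ} (hk : StrictMono k) {m n i r : ℕ}
    {t : List ℕ} (hm2 : t.length < k m) (hmn : m ≤ n) (hi : i ≤ 1)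
    (hlen : (t ++ List.replicate r (2 * i)).length = k n - 1) :
    (i, t ++ List.replicate r (2 * i)) ∈ gapFamilyT k m t := by
  have hsplit : t ++ List.replicate r (2 * i) = (t ++ List.replicate (k m - t.length - 1) (2 * i))
      ++ List.replicate (k n - k m) (2 * i) := by
    have := hk.monotone hmn
    rw [List.append_assoc, ← List.replicate_add]
    congr 2
    simp at hlen
    omega
  have hmem : (i, t ++ List.replicate r (2 * i)) ∈
      gapFamilyAll k i (t ++ List.replicate (k m - t.length - 1) (2 * i)) m := by
    rw [hsplit]
    exact Set.mem_iUnion₂.2 ⟨n, hmn, extreme_mem_gapFamily k i _ hmn⟩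
  interval_cases i
  · exact Or.inl hmem
  · exact Or.inr hmem

theorem child_mem_gapFamilyT {k : ℕ → ℕ} (hk : StrictMono k) {m l n i j x : ℕ}
    {t p : List ℕ} (hm : 1 ≤ m) (hm2 : t.length < k m)
    (hp : (j, p) ∈ gapFamilyT k m t) (hpl : p.length = k l - 1) (hml : m ≤ l)
    (hln : l < n) (hi : i ≤ 1) (hx : x + i = j + 1) :
    (i, p ++ x :: List.replicate (k n - k l - 1) (2 * i)) ∈ gapFamilyT k m t := by
  have hs0 (c : ℕ) : (t ++ List.replicate (k m - t.length - 1) c).length = k m - 1 := by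
    simp; omega
  rcases hp with hp | hp
  · exact Or.inl (child_mem_gapFamilyAll hk hm (hs0 0) hp hpl hml hln hi hx)
  · exact Or.inr (child_mem_gapFamilyAll hk hm (hs0 2) hp hpl hml hln hi hx)

/-- `CoversGap`, with the covered gap located in its family at its rank `n`. -/
def CoversGapAt (k : ℕ → ℕ) (n i : ℕ) (g v : List ℕ) : Prop :=
  ∃ m w, 1 ≤ m ∧ m ≤ n ∧
    ((Associated k m w v ∧ (i, g) ∈ gapFamily k 0 w m n) ∨
      (Associated k m v w ∧ (i, g) ∈ gapFamily k 1 w m n))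

theorem CoversGapAt.coversGap {k : ℕ → ℕ} {n i : ℕ} {g v : List ℕ}
    (h : CoversGapAt k n i g v) : CoversGap k i g v := by
  obtain ⟨m, w, hm, hmn, h | h⟩ := h
  · exact ⟨m, w, hm, Or.inl ⟨h.1, Set.mem_iUnion₂.2 ⟨n, hmn, h.2⟩⟩⟩
  · exact ⟨m, w, hm, Or.inr ⟨h.1, Set.mem_iUnion₂.2 ⟨n, hmn, h.2⟩⟩⟩

theorem CoversGapAt.child {k : ℕ → ℕ} {l n i j x : ℕ} {p u : List ℕ}
    (h : CoversGapAt k l j p u) (hln : l < n) (hi : i ≤ 1) (hx : x + i = j + 1) :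
    CoversGapAt k n i (p ++ x :: List.replicate (k n - k l - 1) (2 * i)) u := by
  obtain ⟨m, w, hm, hml, h | h⟩ := h
  · exact ⟨m, w, hm, hml.trans hln.le, Or.inl ⟨h.1, child_mem_gapFamily hml hln h.2 hi hx⟩⟩
  · exact ⟨m, w, hm, hml.trans hln.le, Or.inr ⟨h.1, child_mem_gapFamily hml hln h.2 hi hx⟩⟩

theorem exists_coversGapAt_of_lt {k : ℕ → ℕ} (hk : StrictMono k) {l n i x r : ℕ}
    {p : List ℕ} (hp : ∀ y ∈ p, y ≤ 2) (hi : i ≤ 1) (hx : x ≤ 2) (hxi : x ≠ 2 * i)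
    (hl : 1 ≤ l) (hln : l ≤ n) (hlN : k (l - 1) < p.length + 1) (hNl : p.length + 1 < k l)
    (hlen : (p ++ x :: List.replicate r (2 * i)).length = k n - 1) :
    ∃ u, (∀ y ∈ u, y ≤ 2) ∧ p <+: u ∧
      CoversGapAt k n i (p ++ x :: List.replicate r (2 * i)) u := by
  set r' := k l - p.length - 2
  have hr' : p.length + 1 + r' = k l - 1 := by omega
  have hsplit : p ++ x :: List.replicate r (2 * i) =
      (p ++ x :: List.replicate r' (2 * i)) ++ List.replicate (k n - k l) (2 * i) := by
    have := hk.monotone hln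
    simp only [List.append_assoc, List.cons_append, ← List.replicate_add]
    congr 3
    simp at hlen
    omega
  have hmem := extreme_mem_gapFamily k i (p ++ x :: List.replicate r' (2 * i)) hln
  rw [← hsplit] at hmem
  interval_cases i
  · obtain ⟨y, rfl⟩ : ∃ y, x = y + 1 := ⟨x - 1, by omega⟩
    refine ⟨p ++ y :: List.replicate r' 2, ?_, List.prefix_append _ _, l, _, hl, hln,
      Or.inl ⟨associated_append_cons_replicate p (by omega) hr' hlN, hmem⟩⟩
    simp only [List.mem_append, List.mem_cons, List.mem_replicate]
    rintro z (hz | rfl | ⟨-, rfl⟩) <;> grind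
  · refine ⟨p ++ (x + 1) :: List.replicate r' 0, ?_, List.prefix_append _ _, l, _, hl, hln,
      Or.inr ⟨associated_append_cons_replicate p (by omega) hr' hlN, hmem⟩⟩
    simp only [List.mem_append, List.mem_cons, List.mem_replicate]
    rintro z (hz | rfl | ⟨-, rfl⟩) <;> grind

theorem exists_coversGapAt {k : ℕ → ℕ} (hk : StrictMono k) {t : List ℕ} {m : ℕ} (hm : 1 ≤ m)
    (hm1 : k (m - 1) ≤ t.length) (hm2 : t.length < k m) :
    ∀ n, m ≤ n → ∀ s : List ℕ, (∀ x ∈ s, x ≤ 2) → s.length = k n - 1 → t <+: s →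
      ∀ i ≤ 1, (i, s) ∉ gapFamilyT k m t →
        ∃ u : List ℕ, (∀ x ∈ u, x ≤ 2) ∧ t <+: u ∧ CoversGapAt k n i s u := by
  intro n
  induction n using Nat.strong_induction_on with
  | _ n ih =>
  intro hmn s hs hsl ⟨d, hd⟩ i hi hs_notin
  subst hd
  rcases d.eq_replicate_or_exists_eq_append_cons_replicate (2 * i) with hd | ⟨q, x, r, hxi, rfl⟩
  · rw [hd] at hs_notin hsl
    exact absurd (mem_gapFamilyT_of_eq_append_replicate hk hm2 hmn hi hsl) hs_notin
  rw [← List.append_assoc] at hs hsl hs_notin ⊢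
  set p := t ++ q
  have hx : x ≤ 2 := hs x (by simp)
  have hp (y) (hy : y ∈ p) : y ≤ 2 := hs y (List.mem_append_left _ hy)
  have htp : t <+: p := List.prefix_append t q
  have hplen : p.length + 1 + r = k n - 1 := by simp at hsl; omega
  obtain ⟨l, hml, hln, hlN, hNl⟩ :=
    hk.monotone.exists_lt_pred_and_le (a := m - 1) (b := n) (N := p.length + 1)
      (by simp [p]; omega) (by omega)
  rcases hNl.lt_or_eq with hNl | hNl
  · obtain ⟨u, hu, hpu, hcov⟩ :=
      exists_coversGapAt_of_lt hk hp hi hx hxi (by omega) hln hlN hNl hsl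
    exact ⟨u, hu, htp.trans hpu, hcov⟩
  -- `(i, p ++ x :: _)` is a child of the gap `(x + i - 1, p)` of rank `l`
  have hln : l < n := hk.lt_iff_lt.1 (by omega)
  obtain rfl : r = k n - k l - 1 := by omega
  have hpl : p.length = k l - 1 := by omega
  have hx' : x + i = (x + i - 1) + 1 := by omega
  obtain ⟨u, hu, htu, hcov⟩ := ih l hln (by omega) p hp hpl htp (x + i - 1) (by omega)
    fun hpT => hs_notin (child_mem_gapFamilyT hk hm hm2 hpT hpl (by omega) hln hi hx')
  exact ⟨u, hu, htu, hcov.child hln hi hx'⟩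

theorem claim2_exists_covering_general (a : ℕ → ℝ) (k : ℕ → ℕ)
    (hk : IsGapEnum a k)
    (t : List ℕ)
    (m : ℕ) (hm : 1 ≤ m) (hm1 : k (m - 1) ≤ t.length) (hm2 : t.length < k m) :
    ∀ n, m ≤ n → ∀ s : List ℕ, (∀ x ∈ s, x ≤ 2) → s.length = k n - 1 → t <+: s →
      ∀ i ≤ 1, (i, s) ∉ gapFamilyT k m t →
        ∃ u : List ℕ, (∀ x ∈ u, x ≤ 2) ∧ t <+: u ∧ CoversGap k i s u := by
  intro n hmn s hs hsl hts i hi hs_notin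
  obtain ⟨u, hu, htu, hcov⟩ := exists_coversGapAt hk.1 hm hm1 hm2 n hmn s hs hsl hts i hi hs_notin
  exact ⟨u, hu, htu, hcov.coversGap⟩

/-- Claim 2: under condition `(*)`, for every `n ≥ m`, every `s ∈ {0,1,2}^{kₙ-1}` with
`t ≺ s` and every `i ∈ {0,1}` with `G^i_s ∉ 𝒢_t`, there is a finite sequence `u` with
terms in `{0,1,2}` such that `t ≺ u` and `G^i_s ⊂_* J_u`. -/
theorem claim2_exists_covering (a : ℕ → ℝ) (k : ℕ → ℕ)
    (ha : ∀ n, 1 ≤ n → 0 < a n ∧ a n < 1)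
    (hinf : {n : ℕ | 1 ≤ n ∧ 1 / 3 < a n}.Infinite)
    (hk0 : a (k 0 + 1) < 1 / 3)
    (hk : IsGapEnum a k)
    (hstar : condStar a k)
    (t : List ℕ) (ht2 : ∀ x ∈ t, x ≤ 2) (htk0 : k 0 ≤ t.length)
    (m : ℕ) (hm : 1 ≤ m) (hm1 : k (m - 1) ≤ t.length) (hm2 : t.length < k m) :
    ∀ n, m ≤ n → ∀ s : List ℕ, (∀ x ∈ s, x ≤ 2) → s.length = k n - 1 → t <+: s →
      ∀ i ≤ 1, (i, s) ∉ gapFamilyT k m t →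
        ∃ u : List ℕ, (∀ x ∈ u, x ≤ 2) ∧ t <+: u ∧ CoversGap k i s u :=
  claim2_exists_covering_general a k hk t m hm hm1 hm2

end CCS
end

section
/- If for every n ∈ ℕ one has δ_n = Δ_n = ∑_{i=n}^∞ (d_{k_i−1} − d_{k_i}) (which holds under the hypotheses of the sufficient condition of Filipczak–Nowakowski), then for every n ∈ ℕ, m_n < 2·∑_{i=n+1}^∞ (d_{k_i−1} − d_{k_i}); in particular, condition (*) fails, so the hypotheses of the two sufficient Cantorval criteria cannot be satisfied simultaneously. -/
open Pointwise MeasureTheory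

namespace CCS

/-- If `δₙ = Δₙ = ∑_{i=n}^∞ (d_{k_i-1} - d_{k_i})` for every `n` (as under the hypotheses of
the Filipczak–Nowakowski sufficient condition), then `mₙ < 2 ∑_{i=n+1}^∞ (d_{k_i-1} - d_{k_i})`
for every `n`; in particular condition `(*)` fails. -/
theorem not_condStar_of_FN (a : ℕ → ℝ) (k : ℕ → ℕ)
    (ha : ∀ n, 1 ≤ n → 0 < a n ∧ a n < 1)
    (hinf : {n : ℕ | 1 ≤ n ∧ 1 / 3 < a n}.Infinite)
    (hk0 : a (k 0 + 1) < 1 / 3)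
    (hk : IsGapEnum a k)
    (hFN : ∀ n, 1 ≤ n →
      deltaMin a k n
          = ((∑' i : ℕ, (dSeq a (k (n + i) - 1) - dSeq a (k (n + i))) : ℝ) : EReal) ∧
        deltaMax a k n
          = ((∑' i : ℕ, (dSeq a (k (n + i) - 1) - dSeq a (k (n + i))) : ℝ) : EReal)) :
    (∀ n, 1 ≤ n → mSeq a k n < ((2 * tailSum a k n : ℝ) : EReal)) ∧ ¬condStar a k := by
  have hdpos : ∀ n, 0 < dSeq a n := by
    intro n
    apply Finset.prod_pos
    intro i hi
    have h := ha i (Finset.mem_Icc.mp hi).1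
    linarith [h.2]
  have hdsucc : ∀ n : ℕ, dSeq a (n + 1) = dSeq a n * ((1 - a (n + 1)) / 2) := by
    intro n
    unfold dSeq
    rw [Finset.prod_Icc_succ_top (by omega : 1 ≤ n + 1)]
  have hdlt : ∀ n : ℕ, dSeq a (n + 1) < dSeq a n := by
    intro n
    rw [hdsucc]
    have h1 := ha (n + 1) (by omega)
    nlinarith [hdpos n, h1.1, h1.2]
  have hanti : Antitone (dSeq a) := antitone_nat_of_succ_le fun n => (hdlt n).le
  set F : ℕ → ℝ := fun j => dSeq a (k j - 1) - dSeq a (k j) with hF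
  have hkmono := hk.1
  have hkge : ∀ j : ℕ, j ≤ k j := fun j => hkmono.le_apply
  have hFpos : ∀ j : ℕ, 1 ≤ j → 0 < F j := by
    intro j hj
    have h1 : 1 ≤ k j := le_trans hj (hkge j)
    have h2 : k j - 1 + 1 = k j := by omega
    have := hdlt (k j - 1)
    rw [h2] at this
    simp only [hF]
    linarith
  have hFnonneg : ∀ j : ℕ, 0 ≤ F j := by
    intro j
    have : dSeq a (k j) ≤ dSeq a (k j - 1) := hanti (by omega)
    simp only [hF]
    linarith
  have hsum : ∀ m : ℕ, 1 ≤ m → Summable fun i => F (m + i) := by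
    intro m hm
    apply summable_of_sum_range_le (c := dSeq a (k (m - 1)))
      (fun i => hFnonneg (m + i))
    intro N
    have key : ∀ N : ℕ, ∑ i ∈ Finset.range N, F (m + i)
        ≤ dSeq a (k (m - 1)) - dSeq a (k (m - 1 + N)) := by
      intro N
      induction N with
      | zero => simp
      | succ N ih =>
        rw [Finset.sum_range_succ]
        have hlt : k (m - 1 + N) < k (m + N) := hkmono (by omega)
        have hle : dSeq a (k (m + N) - 1) ≤ dSeq a (k (m - 1 + N)) :=
          hanti (by omega)
        have hstep : F (m + N) ≤ dSeq a (k (m - 1 + N)) - dSeq a (k (m + N)) := by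
          simp only [hF]; linarith
        have he : m - 1 + (N + 1) = m + N := by omega
        rw [he]
        linarith
    have := key N
    have hpos := hdpos (k (m - 1 + N))
    linarith
  have htail : ∀ n : ℕ, tailSum a k n = ∑' i : ℕ, F (n + 1 + i) := by
    intro n
    unfold tailSum
    rfl
  have htailpos : ∀ n : ℕ, 0 < tailSum a k n := by
    intro n
    rw [htail]
    exact Summable.tsum_pos (hsum (n + 1) (by omega)) (fun i => hFnonneg _) 0
      (hFpos (n + 1 + 0) (by omega))
  have hmain : ∀ n, 1 ≤ n → mSeq a k n < ((2 * tailSum a k n : ℝ) : EReal) := by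
    intro n hn
    obtain ⟨hδ, _⟩ := hFN n hn
    have hS : (∑' i : ℕ, (dSeq a (k (n + i) - 1) - dSeq a (k (n + i))))
        = F n + tailSum a k n := by
      have h0 : (∑' i : ℕ, F (n + i)) = F (n + 0) + ∑' i : ℕ, F (n + (i + 1)) :=
        Summable.tsum_eq_zero_add (hsum n hn)
      have h1 : (∑' i : ℕ, F (n + (i + 1))) = ∑' i : ℕ, F (n + 1 + i) :=
        tsum_congr fun i => by rw [show n + (i + 1) = n + 1 + i from by omega]
      rw [htail]
      calc (∑' i : ℕ, (dSeq a (k (n + i) - 1) - dSeq a (k (n + i))))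
          = ∑' i : ℕ, F (n + i) := rfl
        _ = F (n + 0) + ∑' i : ℕ, F (n + (i + 1)) := h0
        _ = F n + ∑' i : ℕ, F (n + 1 + i) := by rw [h1]; norm_num
    have hle : mSeq a k n
        ≤ deltaMin a k n - ((dSeq a (k n - 1) - dSeq a (k n) : ℝ) : EReal) :=
      min_le_left _ _
    rw [hδ, ← EReal.coe_sub] at hle
    have heq : (∑' i : ℕ, (dSeq a (k (n + i) - 1) - dSeq a (k (n + i))))
        - (dSeq a (k n - 1) - dSeq a (k n)) = tailSum a k n := by
      rw [hS]; simp only [hF]; ring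
    rw [heq] at hle
    refine lt_of_le_of_lt hle ?_
    rw [EReal.coe_lt_coe_iff]
    have := htailpos n
    linarith
  refine ⟨hmain, ?_⟩
  intro hstar
  exact absurd (hstar 1 le_rfl) (not_le.mpr (hmain 1 le_rfl))

end CCS
end

section
/- Let a = (a_1, a_2, a_1, a_2, …) be the 2-periodic sequence with a_1 < 1/3 and a_2 > 1/3, and write d_1 = (1−a_1)/2, d_2 = (1−a_1)(1−a_2)/4. Then for every n ∈ ℕ: k_n = 2n, d_{2n} = d_2^n, d_{2n−1} = d_2^{n−1}·d_1, m_n = d_2^{n−1}·min{d_2 + 2d_1 − 1, 4d_2 − 3d_1 + 1}, and ∑_{i=n+1}^∞ (d_{k_i−1} − d_{k_i}) = d_2^n·(d_1 − d_2)/(1 − d_2). Consequently, condition (*) holds for every n ∈ ℕ if and only if min{d_2 + 2d_1 − 1, 4d_2 − 3d_1 + 1} ≥ 2d_2·(d_1 − d_2)/(1 − d_2). -/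
open Pointwise MeasureTheory

namespace CCS

/-- For the 2-periodic sequence `a = (a₁, a₂, a₁, a₂, …)` with `a₁ < 1/3 < a₂`, writing
`d1 = (1-a₁)/2` and `d2 = (1-a₁)(1-a₂)/4`: for every `n ≥ 1` one has `kₙ = 2n`,
`d_{2n} = d2ⁿ`, `d_{2n-1} = d2^{n-1} d1`, `mₙ = d2^{n-1} · min{d2 + 2d1 - 1, 4d2 - 3d1 + 1}`
and `∑_{i=n+1}^∞ (d_{k_i-1} - d_{k_i}) = d2ⁿ (d1 - d2)/(1 - d2)`; consequently condition `(*)`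
holds iff `min{d2 + 2d1 - 1, 4d2 - 3d1 + 1} ≥ 2 d2 (d1 - d2)/(1 - d2)`. -/
theorem condStar_periodic_characterization (a₁ a₂ : ℝ) (a : ℕ → ℝ)
    (hadef : a = fun n => if n % 2 = 1 then a₁ else a₂)
    (ha₁pos : 0 < a₁) (ha₁ : a₁ < 1 / 3) (ha₂ : 1 / 3 < a₂) (ha₂lt : a₂ < 1)
    (k : ℕ → ℕ) (hk00 : k 0 = 0) (hk : IsGapEnum a k)
    (d1 d2 : ℝ) (hd1 : d1 = (1 - a₁) / 2) (hd2 : d2 = (1 - a₁) * (1 - a₂) / 4) :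
    (∀ n, 1 ≤ n →
      k n = 2 * n ∧
        dSeq a (2 * n) = d2 ^ n ∧
        dSeq a (2 * n - 1) = d2 ^ (n - 1) * d1 ∧
        mSeq a k n
          = ((d2 ^ (n - 1) * min (d2 + 2 * d1 - 1) (4 * d2 - 3 * d1 + 1) : ℝ) : EReal) ∧
        tailSum a k n = d2 ^ n * (d1 - d2) / (1 - d2)) ∧
      (condStar a k ↔
        2 * d2 * (d1 - d2) / (1 - d2) ≤ min (d2 + 2 * d1 - 1) (4 * d2 - 3 * d1 + 1)) := by
  obtain ⟨hmono, hge, hsurj⟩ := hk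
  have haev : ∀ j : ℕ, j % 2 = 0 → a j = a₂ := by
    intro j hj; rw [hadef]; simp only; rw [if_neg (by omega)]
  have haodd : ∀ j : ℕ, j % 2 = 1 → a j = a₁ := by
    intro j hj; rw [hadef]; simp only; rw [if_pos hj]
  have keven : ∀ n, 1 ≤ n → k n % 2 = 0 := by
    intro n hn
    by_contra h
    have h1 : k n % 2 = 1 := by omega
    have h2 := (hge n hn).2
    rw [haodd _ h1] at h2
    linarith
  have hk2 : ∀ n, k n = 2 * n := by
    intro n
    induction n with
    | zero => simpa using hk00
    | succ n ih =>
      have hlt : k n < k (n + 1) := hmono (Nat.lt_succ_self n)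
      have hev := keven (n + 1) (by omega)
      obtain ⟨N, hN1, hNk⟩ := hsurj (2 * n + 2) (by omega)
        (by rw [haev _ (by omega)]; exact ha₂)
      have hNgt : n < N := by
        have : k n < k N := by rw [hNk, ih]; omega
        exact hmono.lt_iff_lt.mp this
      have h1 : k (n + 1) ≤ k N := hmono.monotone (by omega)
      omega
  have dSeq_succ : ∀ m : ℕ, dSeq a (m + 1) = dSeq a m * ((1 - a (m + 1)) / 2) := by
    intro m
    unfold dSeq
    rw [Finset.prod_Icc_succ_top (Nat.le_add_left 1 m)]
  have hd2d1 : d2 = d1 * ((1 - a₂) / 2) := by rw [hd1, hd2]; ring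
  have dval : ∀ n : ℕ, dSeq a (2 * n) = d2 ^ n ∧ dSeq a (2 * n + 1) = d2 ^ n * d1 := by
    intro n
    induction n with
    | zero =>
      constructor
      · simp [dSeq]
      · have : dSeq a 1 = dSeq a 0 * ((1 - a 1) / 2) := dSeq_succ 0
        rw [this, haodd 1 rfl]
        simp [dSeq, hd1]
    | succ n ih =>
      have e1 : 2 * (n + 1) = 2 * n + 1 + 1 := by ring
      have h1 : dSeq a (2 * (n + 1)) = d2 ^ (n + 1) := by
        rw [e1, dSeq_succ, ih.2, haev (2 * n + 1 + 1) (by omega)]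
        rw [pow_succ, hd2d1]; ring
      refine ⟨h1, ?_⟩
      rw [dSeq_succ, h1, haodd (2 * (n + 1) + 1) (by omega), ← hd1]
  have hd1pos : 0 < d1 := by rw [hd1]; linarith
  have hd2pos : 0 < d2 := by rw [hd2]; nlinarith
  have hd2lt1 : d2 < 1 := by rw [hd2]; nlinarith
  have hmain : ∀ n, 1 ≤ n →
      k n = 2 * n ∧
        dSeq a (2 * n) = d2 ^ n ∧
        dSeq a (2 * n - 1) = d2 ^ (n - 1) * d1 ∧
        mSeq a k n
          = ((d2 ^ (n - 1) * min (d2 + 2 * d1 - 1) (4 * d2 - 3 * d1 + 1) : ℝ) : EReal) ∧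
        tailSum a k n = d2 ^ n * (d1 - d2) / (1 - d2) := by
    intro n hn
    obtain ⟨n', rfl⟩ : ∃ n', n = n' + 1 := ⟨n - 1, by omega⟩
    have hdodd : dSeq a (2 * (n' + 1) - 1) = d2 ^ (n' + 1 - 1) * d1 := by
      have e : 2 * (n' + 1) - 1 = 2 * n' + 1 := by omega
      rw [e, Nat.add_sub_cancel]
      exact (dval n').2
    refine ⟨hk2 _, (dval _).1, hdodd, ?_, ?_⟩
    · -- mSeq
      have hIcc : Set.Icc (k (n' + 1 - 1) + 1) (k (n' + 1) - 1) = {2 * n' + 1} := by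
        rw [hk2, hk2]
        have e1 : 2 * (n' + 1 - 1) + 1 = 2 * n' + 1 := by omega
        have e2 : 2 * (n' + 1) - 1 = 2 * n' + 1 := by omega
        rw [e1, e2, Set.Icc_self]
      have hfval : (3 * dSeq a (2 * n' + 1) - dSeq a (2 * n' + 1 - 1) : ℝ)
          = d2 ^ n' * (3 * d1 - 1) := by
        have e : 2 * n' + 1 - 1 = 2 * n' := by omega
        rw [e, (dval n').1, (dval n').2]; ring
      have hmin : deltaMin a k (n' + 1) = ((d2 ^ n' * (3 * d1 - 1) : ℝ) : EReal) := by
        unfold deltaMin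
        rw [hIcc, Set.image_singleton, sInf_singleton, hfval]
      have hmax : deltaMax a k (n' + 1) = ((d2 ^ n' * (3 * d1 - 1) : ℝ) : EReal) := by
        unfold deltaMax
        rw [hIcc, Set.image_singleton, sSup_singleton, hfval]
      have hdkn : dSeq a (k (n' + 1)) = d2 ^ (n' + 1) := by
        rw [hk2]; exact (dval _).1
      have hdkn1 : dSeq a (k (n' + 1) - 1) = d2 ^ n' * d1 := by
        rw [hk2]
        have e : 2 * (n' + 1) - 1 = 2 * n' + 1 := by omega
        rw [e]; exact (dval n').2
      unfold mSeq
      rw [hmin, hmax, hdkn, hdkn1, ← EReal.coe_sub, ← EReal.coe_sub,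
        ← EReal.coe_strictMono.monotone.map_min]
      rw [EReal.coe_eq_coe_iff, Nat.add_sub_cancel,
        mul_min_of_nonneg _ _ (pow_nonneg hd2pos.le n')]
      congr 1 <;> ring
    · -- tailSum
      unfold tailSum
      have hterm : ∀ i : ℕ, dSeq a (k (n' + 1 + 1 + i) - 1) - dSeq a (k (n' + 1 + 1 + i))
          = (d2 ^ (n' + 1) * (d1 - d2)) * d2 ^ i := by
        intro i
        rw [hk2]
        have e1 : 2 * (n' + 1 + 1 + i) - 1 = 2 * (n' + 1 + i) + 1 := by omega
        rw [e1, (dval (n' + 1 + i)).2, (dval (n' + 1 + 1 + i)).1]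
        ring
      rw [tsum_congr hterm, tsum_mul_left, tsum_geometric_of_lt_one hd2pos.le hd2lt1]
      rw [div_eq_mul_inv]
  refine ⟨hmain, ?_⟩
  constructor
  · intro h
    have h1 := h 1 le_rfl
    rw [(hmain 1 le_rfl).2.2.2.1, (hmain 1 le_rfl).2.2.2.2] at h1
    have h2 := EReal.coe_le_coe_iff.mp h1
    have e : 2 * d2 * (d1 - d2) / (1 - d2) = 2 * (d2 ^ 1 * (d1 - d2) / (1 - d2)) := by ring
    rw [e]
    simpa using h2
  · intro H n hn
    obtain ⟨n', rfl⟩ : ∃ n', n = n' + 1 := ⟨n - 1, by omega⟩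
    rw [(hmain _ (by omega)).2.2.2.1, (hmain _ (by omega)).2.2.2.2]
    apply EReal.coe_le_coe_iff.mpr
    have e : 2 * (d2 ^ (n' + 1) * (d1 - d2) / (1 - d2))
        = d2 ^ n' * (2 * d2 * (d1 - d2) / (1 - d2)) := by ring
    rw [e, Nat.add_sub_cancel]
    exact mul_le_mul_of_nonneg_left H (pow_nonneg hd2pos.le n')
end CCS
end
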